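/- Let G, D, F_prev, t_last be real numbers with G > 0, 0 < D ≤ G, F_prev ≥ 0, t_last > 0 and set F = F_prev + t_last. Let J be a finite index set and for each j ∈ J let s_j ≥ 0, t_j > 0, x_j > 0 be real numbers with s_j + t_j ≤ M for a real M ≥ 0, such that for every real time τ, Σ_{j : s_j ≤ τ < s_j + t_j} x_j ≤ G, and suppose the total GPU-work satisfies Σ_{j ∈ J} x_j · t_j = F_prev·G + t_last·D. Then F/M ≤ F / (F − t_last·(G − D)/G). -/

import Mathlib

open MeasureTheory

theorem stmt_6 {ι : Type*} (G D F_prev t_last M : ℝ)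
    (hG : 0 < G) (hD : 0 < D) (hDG : D ≤ G)
    (hFprev : 0 ≤ F_prev) (ht_last : 0 < t_last)
    (F : ℝ) (hF : F = F_prev + t_last)
    (hM : 0 ≤ M)
    (J : Finset ι) (s t x : ι → ℝ)
    (hs : ∀ j ∈ J, 0 ≤ s j) (ht : ∀ j ∈ J, 0 < t j) (hx : ∀ j ∈ J, 0 < x j)
    (hfin : ∀ j ∈ J, s j + t j ≤ M)
    (hcap : ∀ τ : ℝ, ∑ j ∈ J.filter (fun j => s j ≤ τ ∧ τ < s j + t j), x j ≤ G)
    (hwork : ∑ j ∈ J, x j * t j = F_prev * G + t_last * D) :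
    F / M ≤ F / (F - t_last * (G - D) / G) := by
  set W : ℝ := F_prev * G + t_last * D with hW
  have hWpos : 0 < W := by positivity
  -- each job's work as a set integral
  have key : ∀ j ∈ J, x j * t j
      = ∫ τ in Set.Ico (0:ℝ) M, Set.indicator (Set.Ico (s j) (s j + t j)) (fun _ => x j) τ := by
    intro j hj
    rw [MeasureTheory.setIntegral_indicator measurableSet_Ico,
      Set.inter_eq_self_of_subset_right (Set.Ico_subset_Ico (hs j hj) (hfin j hj)),
      MeasureTheory.setIntegral_const, measureReal_def, Real.volume_Ico, smul_eq_mul,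
      ENNReal.toReal_ofReal (by linarith [ht j hj])]
    ring
  have hint : ∀ j ∈ J, IntegrableOn
      (fun τ => Set.indicator (Set.Ico (s j) (s j + t j)) (fun _ => x j) τ) (Set.Ico (0:ℝ) M) := by
    intro j hj
    apply MeasureTheory.Integrable.indicator _ measurableSet_Ico
    exact (integrableOn_const_iff).mpr (Or.inr (by simp [Real.volume_Ico]))
  have hsum : W ≤ G * M := by
    rw [← hwork, Finset.sum_congr rfl key,
      ← MeasureTheory.integral_finset_sum _ hint]
    have hGM : (G * M) = ∫ _ in Set.Ico (0:ℝ) M, G := by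
      rw [MeasureTheory.setIntegral_const, measureReal_def, Real.volume_Ico, smul_eq_mul,
        ENNReal.toReal_ofReal (by linarith)]
      ring
    rw [hGM]
    apply MeasureTheory.setIntegral_mono_on
    · exact MeasureTheory.integrable_finset_sum _ hint
    · exact (integrableOn_const_iff).mpr (Or.inr (by simp [Real.volume_Ico]))
    · exact measurableSet_Ico
    · intro τ _
      have := hcap τ
      rw [Finset.sum_filter] at this
      refine le_trans (le_of_eq ?_) this
      apply Finset.sum_congr rfl
      intro j hj
      simp [Set.indicator_apply, Set.mem_Ico]
  have hden : F - t_last * (G - D) / G = W / G := by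
    rw [hF, hW]; field_simp; ring
  rw [hden]
  have hdpos : 0 < W / G := by positivity
  have hdM : W / G ≤ M := (div_le_iff₀ hG).mpr (by linarith [hsum])
  have hFpos : 0 ≤ F := by rw [hF]; linarith
  gcongr
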